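/- arXiv:2411.02735 — 9 statements merged into one kernel-verified Lean document; each statement's English description precedes it below -/
import Mathlib

section
/- Let ℓ ≥ 1 and define, for i ∈ {0,1,...,ℓ}, the quantum integer [n]_i in ℤ[π]/(π²-1)[q,q⁻¹] by [n]_0 = ((qπ)ⁿ - q⁻ⁿ)/(qπ - q⁻¹) and [n]_i = [n]_{q_i} for i > 0, and let [n]_0! = [1]_0[2]_0⋯[n]_0. Let the bar involution be the ℤ[π]-linear map sending qᵏ ↦ q⁻ᵏ. Then for all n ∈ ℕ, the bar involution satisfies bar([2n]_0!) = πⁿ · [2n]_0!. -/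
/-!
Each factor is bar-invariant up to a power of `π`: reversing the geometric sum
`[m+1]₀ = ∑_{j ≤ m} πʲ q^{2j-m}` shows `bar [m+1]₀ = πᵐ [m+1]₀`, because `π² = 1` makes
`π^{m-j} = π^{m+j}`. Hence `bar [2n]₀! = π^{0+1+⋯+(2n-1)} [2n]₀!`, and that exponent has the
parity of `n`.
-/

noncomputable section

open LaurentPolynomial

/-- The ring `ℤ[π]/(π² - 1)`. -/
abbrev Zpi : Type := Polynomial ℤ ⧸ Ideal.span ({Polynomial.X ^ 2 - 1} : Set (Polynomial ℤ))

/-- The image `π` of `X` in `ℤ[π]/(π² - 1)`. -/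
def piE : Zpi := Ideal.Quotient.mk _ Polynomial.X

/-- The quantum integer `[n]₀ = ((qπ)ⁿ - q⁻ⁿ)/(qπ - q⁻¹)`, written via the geometric sum
`∑_{j<n} (qπ)^j q^{-(n-1-j)}` (so that no division is needed); here `q = T 1`. -/
def qint0 (n : ℕ) : LaurentPolynomial Zpi :=
  ∑ j ∈ Finset.range n, (C piE * T 1) ^ j * T ((j : ℤ) - ((n : ℤ) - 1))

/-- The quantum factorial `[m]₀! = [1]₀ [2]₀ ⋯ [m]₀`. -/
def qfact0 (m : ℕ) : LaurentPolynomial Zpi :=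
  ∏ j ∈ Finset.range m, qint0 (j + 1)

theorem pow_eq_pow_of_sq_eq_one {M : Type*} [Monoid M] {p : M} (hp : p ^ 2 = 1) {a b : ℕ}
    (hab : a % 2 = b % 2) : p ^ a = p ^ b := by
  rw [← Nat.div_add_mod a 2, ← Nat.div_add_mod b 2, pow_add, pow_add, pow_mul, pow_mul, hp,
    one_pow, one_pow, hab]

theorem sum_range_two_mul_mod_two (n : ℕ) : (∑ j ∈ Finset.range (2 * n), j) % 2 = n % 2 := by
  induction n with
  | zero => rfl
  | succ n ih =>
    rw [show 2 * (n + 1) = 2 * n + 1 + 1 by ring, Finset.sum_range_succ, Finset.sum_range_succ]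
    omega

theorem piE_sq : piE ^ 2 = 1 := by
  rw [← sub_eq_zero, piE, ← map_pow, ← map_one (Ideal.Quotient.mk _), ← map_sub,
    Ideal.Quotient.eq_zero_iff_mem]
  exact Ideal.subset_span rfl

theorem C_mul_T_one_pow_mul_T {R : Type*} [CommSemiring R] (p : R) (k : ℕ) (a : ℤ) :
    (C p * T 1) ^ k * T a = C (p ^ k) * T (k + a) := by
  rw [mul_pow, map_pow, T_pow, mul_one, mul_assoc, T_add]

theorem invert_qint0_succ (m : ℕ) : invert (qint0 (m + 1)) = C piE ^ m * qint0 (m + 1) := by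
  rw [qint0, map_sum, Finset.mul_sum, ← Finset.sum_range_reflect]
  refine Finset.sum_congr rfl fun j hj => ?_
  have hjm : j ≤ m := Nat.lt_succ_iff.mp (Finset.mem_range.mp hj)
  rw [C_mul_T_one_pow_mul_T, C_mul_T_one_pow_mul_T, map_mul, invert_C, invert_T, ← mul_assoc,
    ← map_pow, ← map_mul, ← pow_add, pow_eq_pow_of_sq_eq_one piE_sq (a := m + 1 - 1 - j)
      (b := m + j) (by omega)]
  congr 2
  push_cast [Nat.add_sub_cancel, Nat.cast_sub hjm]
  ring

theorem invert_qfact0 (m : ℕ) :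
    invert (qfact0 m) = C piE ^ (∑ j ∈ Finset.range m, j) * qfact0 m := by
  simp only [qfact0, map_prod, invert_qint0_succ, Finset.prod_mul_distrib]
  rw [Finset.prod_pow_eq_pow_sum]

/-- `bar([2n]₀!) = πⁿ · [2n]₀!`, where `bar` is the `ℤ[π]/(π²-1)`-algebra involution
`q ↦ q⁻¹` of the Laurent polynomial ring. -/
theorem stmt0 (n : ℕ) :
    LaurentPolynomial.invert (qfact0 (2 * n)) = C piE ^ n * qfact0 (2 * n) := by
  rw [invert_qfact0, ← map_pow, ← map_pow,
    pow_eq_pow_of_sq_eq_one piE_sq (sum_range_two_mul_mod_two n)]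
end
end

section
/- Let k be a field, d ≥ 1, λ ∈ P(d) a partition, and M^λ' the permutation module k𝔖_d x_{λ'} and N^λ = k𝔖_d y_λ the signed permutation module. There is an algebra isomorphism from End_{k𝔖_d}(⊕_{ν∈Λ(n,d)} M^ν) to End_{k𝔖_d}(⊕_{ν∈Λ(n,d)} N^ν) sending each basis element ξ^g_{λ,μ} (g ∈ ^λD^μ_d) to the corresponding signed version η^g_{λ,μ} given by right multiplication with Y^g_{μ,λ} = ∑_{w∈𝔖_μ g 𝔖_λ ∩ ^μD} sgn(w) w. -/
open Finset
open scoped Classical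

noncomputable section

/-- The partial sum `c 0 + ⋯ + c (s-1)` of a composition `c`. -/
def psum (c : ℕ → ℕ) (s : ℕ) : ℕ := ∑ r ∈ Finset.range s, c r

/-- `c` is a composition of `d` with (at most) `n` parts. -/
def IsComposition (n : ℕ) (c : ℕ → ℕ) (d : ℕ) : Prop :=
  (∀ s, n ≤ s → c s = 0) ∧ psum c n = d

/-- `c` is a partition of `d` with at most `n` parts. -/
def IsPartitionC (n : ℕ) (c : ℕ → ℕ) (d : ℕ) : Prop :=
  IsComposition n c d ∧ ∀ s t, s ≤ t → c t ≤ c s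

/-- The transposed partition: `(transp n c) i = #{s < n | c s > i}`. -/
def transp (n : ℕ) (c : ℕ → ℕ) : ℕ → ℕ := fun i =>
  ((Finset.range n).filter fun s => i < c s).card

/-- The dominance order: `Dominates c c'` means `c ⊴ c'`. -/
def Dominates (c c' : ℕ → ℕ) : Prop :=
  ∀ t, ∑ s ∈ Finset.range t, c s ≤ ∑ s ∈ Finset.range t, c' s

/-- The block index ("color") of the position `i` for the composition `c` with
`n` parts: position `i` lies in the `colorOf n c i`-th block. -/
def colorOf (n : ℕ) (c : ℕ → ℕ) (i : ℕ) : ℕ :=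
  ((Finset.range n).filter fun s => psum c (s + 1) ≤ i).card

/-- The Young (standard parabolic) subgroup `𝔖_c ≤ 𝔖_d` of the composition `c`:
the stabilizer of the block coloring. -/
def young (n : ℕ) (c : ℕ → ℕ) (d : ℕ) : Subgroup (Equiv.Perm (Fin d)) where
  carrier := {g | ∀ i : Fin d, colorOf n c (g i) = colorOf n c i}
  one_mem' := fun _ => rfl
  mul_mem' := by
    intro a b ha hb i
    simpa [Equiv.Perm.mul_apply] using (ha (b i)).trans (hb i)
  inv_mem' := by
    intro a ha i
    simpa using (ha (a⁻¹ i)).symm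

/-- The Coxeter length of a permutation (number of inversions). -/
def lenPerm (d : ℕ) (w : Equiv.Perm (Fin d)) : ℕ :=
  (Finset.univ.filter fun p : Fin d × Fin d => p.1 < p.2 ∧ w p.2 < w p.1).card

/-- `g` is the minimal-length representative of its double coset
`𝔖_{cl} g 𝔖_{cr}` (an element of `^{cl}𝒟^{cr}`). -/
def IsMinDC (d : ℕ) (nl : ℕ) (cl : ℕ → ℕ) (nr : ℕ) (cr : ℕ → ℕ)
    (g : Equiv.Perm (Fin d)) : Prop :=
  ∀ a ∈ young nl cl d, ∀ b ∈ young nr cr d, lenPerm d g ≤ lenPerm d (a * g * b)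

/-- `g` is the minimal-length representative of its coset `𝔖_c g`
(an element of `^{c}𝒟`). -/
def IsMinL (d : ℕ) (n : ℕ) (c : ℕ → ℕ) (g : Equiv.Perm (Fin d)) : Prop :=
  ∀ h ∈ young n c d, lenPerm d g ≤ lenPerm d (h * g)

/-- `x_c = ∑_{g ∈ 𝔖_c} g` in the group algebra `k𝔖_d`. -/
def xEl (k : Type) [CommRing k] (n : ℕ) (c : ℕ → ℕ) (d : ℕ) :
    MonoidAlgebra k (Equiv.Perm (Fin d)) :=
  ∑ g ∈ Finset.univ.filter fun g => g ∈ young n c d,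
    MonoidAlgebra.of k (Equiv.Perm (Fin d)) g

/-- `y_c = ∑_{g ∈ 𝔖_c} sgn(g) g` in the group algebra `k𝔖_d`. -/
def yEl (k : Type) [CommRing k] (n : ℕ) (c : ℕ → ℕ) (d : ℕ) :
    MonoidAlgebra k (Equiv.Perm (Fin d)) :=
  ∑ g ∈ Finset.univ.filter fun g => g ∈ young n c d,
    ((Equiv.Perm.sign g : ℤ) : k) • MonoidAlgebra.of k (Equiv.Perm (Fin d)) g

/-- `X^g_{μ,λ} = ∑_{w ∈ 𝔖_μ g 𝔖_λ ∩ ^μ𝒟} w`. -/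
def Xg (k : Type) [CommRing k] (d : ℕ) (nμ : ℕ) (cμ : ℕ → ℕ) (nl : ℕ) (cl : ℕ → ℕ)
    (g : Equiv.Perm (Fin d)) : MonoidAlgebra k (Equiv.Perm (Fin d)) :=
  ∑ w ∈ Finset.univ.filter fun w =>
      (∃ a ∈ young nμ cμ d, ∃ b ∈ young nl cl d, w = a * g * b) ∧ IsMinL d nμ cμ w,
    MonoidAlgebra.of k (Equiv.Perm (Fin d)) w

/-- `Y^g_{μ,λ} = ∑_{w ∈ 𝔖_μ g 𝔖_λ ∩ ^μ𝒟} sgn(w) w`. -/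
def Yg (k : Type) [CommRing k] (d : ℕ) (nμ : ℕ) (cμ : ℕ → ℕ) (nl : ℕ) (cl : ℕ → ℕ)
    (g : Equiv.Perm (Fin d)) : MonoidAlgebra k (Equiv.Perm (Fin d)) :=
  ∑ w ∈ Finset.univ.filter fun w =>
      (∃ a ∈ young nμ cμ d, ∃ b ∈ young nl cl d, w = a * g * b) ∧ IsMinL d nμ cμ w,
    ((Equiv.Perm.sign w : ℤ) : k) • MonoidAlgebra.of k (Equiv.Perm (Fin d)) w

/-- The permutation module `M^c = k𝔖_d · x_c` as a left ideal of `k𝔖_d`. -/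
def Mmod (k : Type) [CommRing k] (n : ℕ) (c : ℕ → ℕ) (d : ℕ) :
    Submodule (MonoidAlgebra k (Equiv.Perm (Fin d))) (MonoidAlgebra k (Equiv.Perm (Fin d))) :=
  Submodule.span (MonoidAlgebra k (Equiv.Perm (Fin d))) {xEl k n c d}

/-- The signed permutation module `N^c = k𝔖_d · y_c` as a left ideal of `k𝔖_d`. -/
def Nmod (k : Type) [CommRing k] (n : ℕ) (c : ℕ → ℕ) (d : ℕ) :
    Submodule (MonoidAlgebra k (Equiv.Perm (Fin d))) (MonoidAlgebra k (Equiv.Perm (Fin d))) :=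
  Submodule.span (MonoidAlgebra k (Equiv.Perm (Fin d))) {yEl k n c d}

instance (k : Type) [CommRing k] (d : ℕ)
    (p : Submodule (MonoidAlgebra k (Equiv.Perm (Fin d)))
      (MonoidAlgebra k (Equiv.Perm (Fin d)))) :
    SMulCommClass (MonoidAlgebra k (Equiv.Perm (Fin d))) k ↥p where
  smul_comm a c x := Subtype.ext <| by
    show a • (c • (x : MonoidAlgebra k (Equiv.Perm (Fin d)))) =
      c • (a • (x : MonoidAlgebra k (Equiv.Perm (Fin d))))
    exact (smul_comm c a ((x : MonoidAlgebra k (Equiv.Perm (Fin d))))).symm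

/-- The index set `Λ(n,d)` of compositions of `d` with at most `n` parts. -/
def CompT (n d : ℕ) : Type := {c : ℕ → ℕ // IsComposition n c d}

/-- The direct sum `⊕_{ν ∈ Λ(n,d)} M^ν` (realized as a product, the index set
being finite). -/
abbrev MMs (k : Type) [CommRing k] (n d : ℕ) : Type :=
  ∀ ν : CompT n d, ↥(Mmod k n ν.1 d)

/-- The direct sum `⊕_{ν ∈ Λ(n,d)} N^ν`. -/
abbrev NNs (k : Type) [CommRing k] (n d : ℕ) : Type :=
  ∀ ν : CompT n d, ↥(Nmod k n ν.1 d)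

/-- The endomorphism `ξ^g_{λ,μ}` of `⊕_ν M^ν`: zero on the summands `M^ρ`, `ρ ≠ μ`,
and mapping `M^μ` to `M^λ` by right multiplication with `X^g_{μ,λ}`. -/
def IsXi (k : Type) [CommRing k] (n d : ℕ) (lam mu : CompT n d) (g : Equiv.Perm (Fin d))
    (e : Module.End (MonoidAlgebra k (Equiv.Perm (Fin d))) (MMs k n d)) : Prop :=
  ∀ v : MMs k n d, ∀ ρ : CompT n d,
    (e v ρ : MonoidAlgebra k (Equiv.Perm (Fin d))) =
      if ρ = lam then
        (v mu : MonoidAlgebra k (Equiv.Perm (Fin d))) * Xg k d n mu.1 n lam.1 g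
      else 0

/-- The endomorphism `η^g_{λ,μ}` of `⊕_ν N^ν`: zero on the summands `N^ρ`, `ρ ≠ μ`,
and mapping `N^μ` to `N^λ` by right multiplication with `Y^g_{μ,λ}`. -/
def IsEta (k : Type) [CommRing k] (n d : ℕ) (lam mu : CompT n d) (g : Equiv.Perm (Fin d))
    (e : Module.End (MonoidAlgebra k (Equiv.Perm (Fin d))) (NNs k n d)) : Prop :=
  ∀ v : NNs k n d, ∀ ρ : CompT n d,
    (e v ρ : MonoidAlgebra k (Equiv.Perm (Fin d))) =
      if ρ = lam then
        (v mu : MonoidAlgebra k (Equiv.Perm (Fin d))) * Yg k d n mu.1 n lam.1 g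
      else 0


/-!
Twisting by the sign character, `g ↦ sgn(g) g`, is an involutive `k`-algebra automorphism `σ`
of `k𝔖_d` with `σ(x_ν) = y_ν` and `σ(X^g_{μ,λ}) = Y^g_{μ,λ}`. Hence `σ` maps each left ideal
`M^ν` onto `N^ν`, giving a `σ`-semilinear bijection `T : ⊕ M^ν → ⊕ N^ν`. Conjugation by `T`
is a ring isomorphism of the endomorphism algebras, and it turns right multiplication by
`X^g_{μ,λ}` into right multiplication by `σ(X^g_{μ,λ}) = Y^g_{μ,λ}`.
-/

theorem Submodule.apply_mem_span_singleton {A : Type*} [Semiring A] (σ : A →+* A) {x y : A}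
    (h : y ∈ span A {x}) : σ y ∈ span A {σ x} := by
  obtain ⟨a, rfl⟩ := mem_span_singleton.mp h
  exact mem_span_singleton.mpr ⟨σ a, (map_mul σ a x).symm⟩

def Submodule.piEquivOfInvolution {A ι : Type*} [Semiring A] (σ : A →+* A) [RingHomInvPair σ σ]
    {P Q : ι → Submodule A A} (hPQ : ∀ i, ∀ x ∈ P i, σ x ∈ Q i)
    (hQP : ∀ i, ∀ x ∈ Q i, σ x ∈ P i) : (∀ i, P i) ≃ₛₗ[σ] ∀ i, Q i where
  toFun v i := ⟨σ (v i), hPQ i _ (v i).2⟩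
  invFun v i := ⟨σ (v i), hQP i _ (v i).2⟩
  map_add' v w := by ext i; exact map_add σ (v i : A) (w i)
  map_smul' a v := by ext i; exact map_mul σ a (v i)
  left_inv v := by ext i; exact RingHomInvPair.comp_apply_eq (σ := σ) (σ' := σ)
  right_inv v := by ext i; exact RingHomInvPair.comp_apply_eq (σ := σ) (σ' := σ)

theorem LinearEquiv.conjRingEquiv_smul {A S M N : Type*} [Semiring A] [Semiring S]
    [AddCommMonoid M] [AddCommMonoid N] [Module A M] [Module A N] [Module S M] [Module S N]
    [SMulCommClass A S M] [SMulCommClass A S N] {σ : A →+* A} [RingHomInvPair σ σ]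
    (T : M ≃ₛₗ[σ] N) (hT : ∀ (c : S) (m : M), T (c • m) = c • T m) (c : S)
    (e : Module.End A M) : T.conjRingEquiv (c • e) = c • T.conjRingEquiv e :=
  LinearMap.ext fun _ => hT c _

namespace MonoidAlgebra

variable {k G : Type*} [CommSemiring k] [Monoid G]

def twist (χ : G →* kˣ) : MonoidAlgebra k G →ₐ[k] MonoidAlgebra k G :=
  lift k (MonoidAlgebra k G) G
    { toFun := fun g => (χ g : k) • of k G g
      map_one' := by rw [map_one, Units.val_one, one_smul, map_one]
      map_mul' := fun g h => by rw [map_mul, Units.val_mul, map_mul, smul_mul_smul_comm] }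

theorem twist_of (χ : G →* kˣ) (g : G) : twist χ (of k G g) = (χ g : k) • of k G g := by
  rw [twist, lift_of]
  rfl

theorem twist_involutive {χ : G →* kˣ} (hχ : χ * χ = 1) : Function.Involutive (twist χ) := by
  have hcomp : (twist χ).comp (twist χ) = AlgHom.id k (MonoidAlgebra k G) := by
    refine algHom_ext (fun g => ?_) (Subsingleton.elim _ _)
    rw [AlgHom.comp_apply, ← of_apply, twist_of, map_smul, twist_of, smul_smul,
      ← Units.val_mul, ← MonoidHom.mul_apply, hχ, MonoidHom.one_apply, Units.val_one, one_smul,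
      AlgHom.id_apply]
  exact DFunLike.congr_fun hcomp

end MonoidAlgebra

section SignTwist

open MonoidAlgebra

variable (k : Type*) [CommRing k] (α : Type*) [Fintype α] [DecidableEq α]

def Equiv.Perm.signChar : Equiv.Perm α →* kˣ :=
  (Units.map (Int.castRingHom k : ℤ →* k)).comp Equiv.Perm.sign

theorem Equiv.Perm.signChar_mul_self : signChar k α * signChar k α = 1 := by
  ext g
  rw [MonoidHom.mul_apply, signChar, MonoidHom.comp_apply, ← map_mul (Units.map _),
    Int.units_mul_self, map_one, MonoidHom.one_apply]

abbrev signTwist : MonoidAlgebra k (Equiv.Perm α) →ₐ[k] MonoidAlgebra k (Equiv.Perm α) :=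
  twist (Equiv.Perm.signChar k α)

theorem signTwist_involutive : Function.Involutive (signTwist k α) :=
  twist_involutive (Equiv.Perm.signChar_mul_self k α)

instance : RingHomInvPair (signTwist k α : MonoidAlgebra k (Equiv.Perm α) →+* _)
    (signTwist k α : MonoidAlgebra k (Equiv.Perm α) →+* _) :=
  ⟨RingHom.ext (signTwist_involutive k α), RingHom.ext (signTwist_involutive k α)⟩

variable {k α}

theorem signTwist_sum_of (s : Finset (Equiv.Perm α)) :
    signTwist k α (∑ g ∈ s, of k (Equiv.Perm α) g) =
      ∑ g ∈ s, ((Equiv.Perm.sign g : ℤ) : k) • of k (Equiv.Perm α) g := by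
  rw [map_sum]
  refine Finset.sum_congr rfl fun g _ => ?_
  rw [twist_of]
  rfl

end SignTwist

section SchurAlgebra

variable {k : Type} [CommRing k] {n d : ℕ}

theorem signTwist_xEl (c : ℕ → ℕ) : signTwist k (Fin d) (xEl k n c d) = yEl k n c d :=
  signTwist_sum_of _

theorem signTwist_yEl (c : ℕ → ℕ) : signTwist k (Fin d) (yEl k n c d) = xEl k n c d := by
  rw [← signTwist_xEl, signTwist_involutive]

theorem signTwist_Xg (nμ : ℕ) (cμ : ℕ → ℕ) (nl : ℕ) (cl : ℕ → ℕ) (g : Equiv.Perm (Fin d)) :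
    signTwist k (Fin d) (Xg k d nμ cμ nl cl g) = Yg k d nμ cμ nl cl g :=
  signTwist_sum_of _

theorem signTwist_mem_Nmod {c : ℕ → ℕ} {v : MonoidAlgebra k (Equiv.Perm (Fin d))}
    (hv : v ∈ Mmod k n c d) : signTwist k (Fin d) v ∈ Nmod k n c d := by
  rw [Nmod, ← signTwist_xEl]
  exact Submodule.apply_mem_span_singleton _ hv

theorem signTwist_mem_Mmod {c : ℕ → ℕ} {v : MonoidAlgebra k (Equiv.Perm (Fin d))}
    (hv : v ∈ Nmod k n c d) : signTwist k (Fin d) v ∈ Mmod k n c d := by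
  rw [Mmod, ← signTwist_yEl]
  exact Submodule.apply_mem_span_singleton _ hv

variable (k n d) in
def signTwistEquiv :
    MMs k n d ≃ₛₗ[(signTwist k (Fin d) :
      MonoidAlgebra k (Equiv.Perm (Fin d)) →+* MonoidAlgebra k (Equiv.Perm (Fin d)))] NNs k n d :=
  Submodule.piEquivOfInvolution _ (fun _ _ => signTwist_mem_Nmod) (fun _ _ => signTwist_mem_Mmod)

theorem signTwistEquiv_apply_coe (v : MMs k n d) (ν : CompT n d) :
    (signTwistEquiv k n d v ν : MonoidAlgebra k (Equiv.Perm (Fin d))) =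
      signTwist k (Fin d) (v ν) :=
  rfl

theorem signTwistEquiv_symm_apply_coe (v : NNs k n d) (ν : CompT n d) :
    ((signTwistEquiv k n d).symm v ν : MonoidAlgebra k (Equiv.Perm (Fin d))) =
      signTwist k (Fin d) (v ν) :=
  rfl

theorem signTwistEquiv_smul (c : k) (v : MMs k n d) :
    signTwistEquiv k n d (c • v) = c • signTwistEquiv k n d v := by
  funext ν
  exact Subtype.ext <|
    map_smul (signTwist k (Fin d)) c (v ν : MonoidAlgebra k (Equiv.Perm (Fin d)))

end SchurAlgebra

theorem stmt5 (k : Type) [Field k] (n d : ℕ) :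
    ∃ φ : Module.End (MonoidAlgebra k (Equiv.Perm (Fin d))) (MMs k n d) ≃+*
        Module.End (MonoidAlgebra k (Equiv.Perm (Fin d))) (NNs k n d),
      -- `φ` is an isomorphism of `k`-algebras …
      (∀ (c : k) x, φ (c • x) = c • φ x) ∧
      -- … sending each `ξ^g_{λ,μ}` to `η^g_{λ,μ}`
      ∀ (lam mu : CompT n d) (g : Equiv.Perm (Fin d)),
        IsMinDC d n lam.1 n mu.1 g →
        ∀ e f, IsXi k n d lam mu g e → IsEta k n d lam mu g f → φ e = f := by
  refine ⟨(signTwistEquiv k n d).conjRingEquiv,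
    LinearEquiv.conjRingEquiv_smul _ signTwistEquiv_smul, ?_⟩
  intro lam mu g _ e f he hf
  refine LinearMap.ext fun v => funext fun ρ => Subtype.ext ?_
  rw [LinearEquiv.conjRingEquiv_apply_apply, signTwistEquiv_apply_coe, he, hf]
  split_ifs
  · rw [map_mul, signTwistEquiv_symm_apply_coe, signTwist_involutive, signTwist_Xg]
  · exact map_zero _
end
end

section
/- Let A be a (graded super)algebra over a field, P a finitely generated projective A-module, and Z ⊆ P a submodule such that every A-homomorphism P → P/Z annihilates Z. Then P/Z is a projective module over the quotient algebra A/Ann_A(P/Z). -/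
/-!
A dual basis of the projective module `P` writes `z = ∑ φᵢ(z) • xᵢ`. For `z ∈ Z` every
coefficient `φᵢ(z)` annihilates `P ⧸ Z`, since `a ↦ a • v` composed with `φᵢ` is a map
`P → P ⧸ Z`; hence `Z ⊆ Ann(P ⧸ Z) • P`. A lift `P → M` of `P → P ⧸ Z → N` then kills `Z`
whenever `M` is annihilated by `Ann(P ⧸ Z)`, so it descends to `P ⧸ Z`.
-/

universe u

open Submodule in
theorem Module.Projective.mem_annihilator_smul_top {A P Q : Type*} [Ring A] [AddCommGroup P]
    [Module A P] [Module.Projective A P] [AddCommGroup Q] [Module A Q] {z : P}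
    (hz : ∀ f : P →ₗ[A] Q, f z = 0) : z ∈ Module.annihilator A Q • (⊤ : Submodule A P) := by
  obtain ⟨s, hs⟩ := Module.projective_def.mp (inferInstance : Module.Projective A P)
  have hcoeff (x : P) : s z x ∈ Module.annihilator A Q := by
    refine Module.mem_annihilator.mpr fun q ↦ ?_
    simpa using hz (LinearMap.toSpanSingleton A Q q ∘ₗ Finsupp.lapply x ∘ₗ s)
  rw [← hs z, Finsupp.linearCombination_apply]
  exact sum_mem fun x _ ↦ smul_mem_smul (hcoeff x) mem_top

theorem Submodule.smul_top_le_ker {A P M : Type*} [Ring A] [AddCommGroup P] [Module A P]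
    [AddCommGroup M] [Module A M] {I : Ideal A} (hI : I ≤ Module.annihilator A M)
    (f : P →ₗ[A] M) : I • (⊤ : Submodule A P) ≤ LinearMap.ker f :=
  smul_le.mpr fun a ha x _ ↦ by
    simp [Module.mem_annihilator.mp (hI ha)]

theorem stmt6_general (A : Type u) [Ring A]
    (P : Type u) [AddCommGroup P] [Module A P] [Module.Projective A P]
    (Z : Submodule A P)
    (hZ : ∀ f : P →ₗ[A] P ⧸ Z, ∀ z ∈ Z, f z = 0)
    (M N : Type u) [AddCommGroup M] [Module A M] [AddCommGroup N] [Module A N]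
    (hann : ∀ a : A, (∀ x : P ⧸ Z, a • x = 0) → ∀ m : M, a • m = 0)
    (π : M →ₗ[A] N) (hπ : Function.Surjective π) (f : (P ⧸ Z) →ₗ[A] N) :
    ∃ g : (P ⧸ Z) →ₗ[A] M, π.comp g = f := by
  have hZ_le : Z ≤ Module.annihilator A (P ⧸ Z) • ⊤ := fun z hz ↦
    Module.Projective.mem_annihilator_smul_top fun g ↦ hZ g z hz
  have hann_le : Module.annihilator A (P ⧸ Z) ≤ Module.annihilator A M := fun a ha ↦
    Module.mem_annihilator.mpr (hann a (Module.mem_annihilator.mp ha))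
  obtain ⟨h, hh⟩ := Module.projective_lifting_property π (f ∘ₗ Z.mkQ) hπ
  refine ⟨Z.liftQ h (hZ_le.trans (Submodule.smul_top_le_ker hann_le h)), ?_⟩
  ext x
  exact LinearMap.congr_fun hh x

theorem stmt6 (F : Type u) [Field F] (A : Type u) [Ring A] [Algebra F A]
    [FiniteDimensional F A]
    (P : Type u) [AddCommGroup P] [Module A P] [Module.Finite A P] [Module.Projective A P]
    (Z : Submodule A P)
    (hZ : ∀ f : P →ₗ[A] P ⧸ Z, ∀ z ∈ Z, f z = 0)
    (M N : Type u) [AddCommGroup M] [Module A M] [AddCommGroup N] [Module A N]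
    (hann : ∀ a : A, (∀ x : P ⧸ Z, a • x = 0) → ∀ m : M, a • m = 0)
    (π : M →ₗ[A] N) (hπ : Function.Surjective π) (f : (P ⧸ Z) →ₗ[A] N) :
    ∃ g : (P ⧸ Z) →ₗ[A] M, π.comp g = f :=
  stmt6_general A P Z hZ M N hann π hπ f
end

section
/- Let O be a principal ideal domain of characteristic 0, A a graded O-superalgebra with each graded component finitely generated over O, and e ∈ A an even degree-0 idempotent. Suppose that for every maximal ideal m of O, with F = O/m, the functors A_F e_F ⊗_{e_F A_F e_F} – and e_F A_F ⊗_{A_F} – are mutually quasi-inverse equivalences (equivalently A_F e_F A_F = A_F). Then A e A = A, i.e. the corresponding functors over O are also mutually quasi-inverse equivalences. -/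
/-!
Statement 8: Let `O` be a PID of characteristic 0, `A` a (ℤ × ℤ/2)-graded
`O`-superalgebra whose graded components are finitely generated `O`-modules, and
`e ∈ A` an even degree-0 idempotent.  If for every maximal ideal `m` of `O`, with
`F = O/m`, one has `A_F e_F A_F = A_F` (equivalently, the `O`-span of `AeA` together
with `mA` is all of `A`), then `AeA = A`, i.e. the corresponding functors give a
Morita equivalence between `A` and `eAe` over `O`.
-/

universe u

theorem stmt8 (O : Type u) [CommRing O] [IsDomain O] [IsPrincipalIdealRing O]
    [CharZero O]
    (A : Type u) [Ring A] [Algebra O A]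
    (𝒜 : ℤ × ZMod 2 → Submodule O A) [GradedRing 𝒜]
    (hfin : ∀ i, Module.Finite O ↥(𝒜 i))
    (e : A) (he : IsIdempotentElem e) (he0 : e ∈ 𝒜 (0, 0))
    (hF : ∀ m : Ideal O, m.IsMaximal →
      Submodule.span O {x : A | ∃ a b : A, x = a * e * b} ⊔ m • (⊤ : Submodule O A) = ⊤) :
    Submodule.span O {x : A | ∃ a b : A, x = a * e * b} = ⊤ := by
  classical
  set N : Submodule O A := Submodule.span O {x : A | ∃ a b : A, x = a * e * b} with hN
  -- the linear projection onto the `i`-th graded component, viewed inside `A`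
  let π : (ℤ × ZMod 2) → A →ₗ[O] A := fun i =>
    (𝒜 i).subtype ∘ₗ (DirectSum.component O (ℤ × ZMod 2) (fun j => ↥(𝒜 j)) i)
      ∘ₗ (DirectSum.decomposeLinearEquiv 𝒜).toLinearMap
  have hπ_apply : ∀ i x, π i x = (DirectSum.decompose 𝒜 x i : A) := fun i x => rfl
  have hπ_same : ∀ i x, x ∈ 𝒜 i → π i x = x := by
    intro i x hx
    rw [hπ_apply, DirectSum.decompose_of_mem_same 𝒜 hx]
  have hπ_mem : ∀ i x, π i x ∈ 𝒜 i := by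
    intro i x
    rw [hπ_apply]; exact (DirectSum.decompose 𝒜 x i).2
  have hπ_homog : ∀ i j (x : A), x ∈ 𝒜 j → π i x = x ∨ π i x = 0 := by
    intro i j x hx
    by_cases h : i = j
    · subst h; exact Or.inl (hπ_same _ _ hx)
    · right
      rw [hπ_apply, DirectSum.decompose_of_mem_ne 𝒜 hx (Ne.symm h)]
  have hgen : ∀ a b : A, a * e * b ∈ N := fun a b => Submodule.subset_span ⟨a, b, rfl⟩
  -- `N` is stable under each projection
  have hπN : ∀ i, ∀ x ∈ N, π i x ∈ N := by
    intro i x hx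
    induction hx using Submodule.span_induction with
    | mem x hx =>
      obtain ⟨a, b, rfl⟩ := hx
      have key : a * e * b =
          ∑ j ∈ (DirectSum.decompose 𝒜 a).support,
            ∑ k ∈ (DirectSum.decompose 𝒜 b).support,
              (DirectSum.decompose 𝒜 a j : A) * e * (DirectSum.decompose 𝒜 b k : A) := by
        conv_lhs => rw [← DirectSum.sum_support_decompose 𝒜 a,
          ← DirectSum.sum_support_decompose 𝒜 b]
        rw [Finset.sum_mul, Finset.sum_mul]
        refine Finset.sum_congr rfl fun j _ => ?_
        rw [Finset.mul_sum]
      rw [key, map_sum]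
      refine Submodule.sum_mem _ fun j _ => ?_
      rw [map_sum]
      refine Submodule.sum_mem _ fun k _ => ?_
      have hmem : (DirectSum.decompose 𝒜 a j : A) * e * (DirectSum.decompose 𝒜 b k : A)
          ∈ 𝒜 (j + (0, 0) + k) :=
        SetLike.mul_mem_graded (SetLike.mul_mem_graded (DirectSum.decompose 𝒜 a j).2 he0)
          (DirectSum.decompose 𝒜 b k).2
      rcases hπ_homog i _ _ hmem with h | h
      · rw [h]; exact hgen _ _
      · rw [h]; exact N.zero_mem
    | zero => rw [map_zero]; exact N.zero_mem
    | add x y _ _ hx hy => rw [map_add]; exact N.add_mem hx hy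
    | smul c x _ hx => rw [map_smul]; exact N.smul_mem c hx
  -- projections map `m • ⊤` into `m • 𝒜 i`
  have hπm : ∀ i (m : Ideal O), ∀ x ∈ m • (⊤ : Submodule O A), π i x ∈ m • 𝒜 i := by
    intro i m x hx
    refine Submodule.smul_induction_on hx ?_ ?_
    · intro c hc a _
      rw [map_smul]
      exact Submodule.smul_mem_smul hc (hπ_mem i a)
    · intro x y hx hy
      rw [map_add]; exact Submodule.add_mem _ hx hy
  -- each graded component is contained in `N`
  have hcomp : ∀ i, 𝒜 i ≤ N := by
    intro i
    haveI : Module.Finite O ↥(𝒜 i) := hfin i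
    set S' : Submodule O ↥(𝒜 i) := N.comap (𝒜 i).subtype with hS'def
    suffices hS' : S' = ⊤ by
      intro x hx
      exact (hS' ▸ Submodule.mem_top : (⟨x, hx⟩ : ↥(𝒜 i)) ∈ S')
    have hsup : ∀ m : Ideal O, m.IsMaximal →
        S' ⊔ m • (⊤ : Submodule O ↥(𝒜 i)) = ⊤ := by
      intro m hm
      have h1 : ∀ x : ↥(𝒜 i), (x : A) ∈ (N ⊓ 𝒜 i) ⊔ (m • 𝒜 i) := by
        intro x
        have hx : (x : A) ∈ N ⊔ m • (⊤ : Submodule O A) := by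
          rw [hF m hm]; trivial
        obtain ⟨n, hn, y, hy, hxy⟩ := Submodule.mem_sup.mp hx
        have hxe : (x : A) = π i n + π i y := by
          rw [← map_add, hxy]
          exact (hπ_same i x x.2).symm
        rw [hxe]
        exact Submodule.add_mem _
          (Submodule.mem_sup_left (Submodule.mem_inf.mpr ⟨hπN i n hn, hπ_mem i n⟩))
          (Submodule.mem_sup_right (hπm i m y hy))
      apply Submodule.map_injective_of_injective (𝒜 i).injective_subtype
      rw [Submodule.map_sup, Submodule.map_smul'', Submodule.map_top,
        Submodule.range_subtype, Submodule.map_comap_subtype]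
      refine le_antisymm (sup_le inf_le_left
        (Submodule.smul_le.mpr fun c _ a ha => (𝒜 i).smul_mem c ha)) ?_
      intro x hx
      have := h1 ⟨x, hx⟩
      rwa [inf_comm] at this
    -- Nakayama on the quotient
    have hQ : ∀ m : Ideal O, m.IsMaximal →
        (⊤ : Submodule O (↥(𝒜 i) ⧸ S')) ≤ m • ⊤ := by
      intro m hm
      have hmap := congrArg (Submodule.map S'.mkQ) (hsup m hm)
      rw [Submodule.map_sup, Submodule.map_smul''] at hmap
      have h0 : Submodule.map S'.mkQ S' = ⊥ := S'.mkQ_map_self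
      have htop : Submodule.map S'.mkQ ⊤ = ⊤ := by
        rw [Submodule.map_top, Submodule.range_mkQ]
      rw [h0, htop, bot_sup_eq] at hmap
      rw [hmap]
    have hann : (⊤ : Submodule O (↥(𝒜 i) ⧸ S')).annihilator = ⊤ := by
      by_contra h
      obtain ⟨m, hm, hle⟩ := Ideal.exists_le_maximal _ h
      obtain ⟨r, hr1, hr0⟩ :=
        Submodule.exists_sub_one_mem_and_smul_eq_zero_of_fg_of_le_smul m ⊤
          (Module.Finite.fg_top (R := O) (M := ↥(𝒜 i) ⧸ S')) (hQ m hm)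
      have hrm : r ∈ m := hle (Submodule.mem_annihilator.mpr fun q _ => hr0 q trivial)
      have h1 : (1 : O) ∈ m := by
        have := m.sub_mem hrm hr1
        simpa using this
      exact hm.ne_top ((Ideal.eq_top_iff_one m).mpr h1)
    have h1 : (1 : O) ∈ (⊤ : Submodule O (↥(𝒜 i) ⧸ S')).annihilator := by
      rw [hann]; trivial
    have hzero : ∀ q : ↥(𝒜 i) ⧸ S', q = 0 := by
      intro q
      have := Submodule.mem_annihilator.mp h1 q trivial
      simpa using this
    rw [Submodule.eq_top_iff']
    intro x
    have := hzero (S'.mkQ x)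
    rwa [Submodule.mkQ_apply, Submodule.Quotient.mk_eq_zero] at this
  -- conclude
  have htop : (⊤ : Submodule O A) ≤ N := by
    rw [← (DirectSum.Decomposition.isInternal 𝒜).submodule_iSup_eq_top]
    exact iSup_le hcomp
  exact le_antisymm le_top htop
end

section
/- Let k be a field, n ≥ d ≥ 1, and S(n,d) the classical Schur algebra. Let ξ_{ω_d} be the idempotent ξ^1_{ω_d,ω_d} corresponding to the weight ω_d = (1^d). Then the map g ↦ ξ^g_{ω_d,ω_d} defines an algebra isomorphism k𝔖_d → ξ_{ω_d} S(n,d) ξ_{ω_d}. -/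
open Finset
open scoped Classical

noncomputable section

/-- The weight idempotent `ξ_ν = ξ^1_{ν,ν}`: the projection of `⊕_ρ M^ρ` onto the
summand `M^ν`. -/
def xiIdem (k : Type) [CommRing k] (n d : ℕ) (ν : CompT n d) :
    Module.End (MonoidAlgebra k (Equiv.Perm (Fin d))) (MMs k n d) where
  toFun v := fun ρ => if ρ = ν then v ρ else 0
  map_add' v w := by
    funext ρ
    by_cases h : ρ = ν <;> simp [h]
  map_smul' a v := by
    funext ρ
    by_cases h : ρ = ν <;> simp [h]

/-- The composition `ω_d = (1^d)`. -/
def omegaC (d : ℕ) : ℕ → ℕ := fun s => if s < d then 1 else 0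

lemma omega_comp (n d : ℕ) (h : d ≤ n) : IsComposition n (omegaC d) d := by
  refine ⟨fun s hs => ?_, ?_⟩
  · have : ¬ s < d := by omega
    simp [omegaC, this]
  · have h1 : ((Finset.range n).filter fun r => r < d) = Finset.range d := by
      ext r
      simp only [Finset.mem_filter, Finset.mem_range]
      omega
    simp [psum, omegaC, Finset.sum_ite_eq, Finset.sum_boole, h1]

/-- `ω_d` as an element of `Λ(n,d)`. -/
def omegaElt (n d : ℕ) (h : d ≤ n) : CompT n d := ⟨omegaC d, omega_comp n d h⟩

/-
The Young subgroup of `ω_d` is trivial, so `x_{ω_d} = 1` and `M^{ω_d}` is the regular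
module `A = k𝔖_d`. For any family of left ideals of a ring `A` with `p i₀ = ⊤`, let `e` be the
vector with `1` in the summand `i₀`. An endomorphism `f` of `⊕ p i` in the corner of the
projection `ξ` onto the summand `i₀` satisfies `f v = f (ξ v) = v_{i₀} • f e`, so it is right
multiplication by `(f e)_{i₀}` on that summand and zero elsewhere. Right multiplication reverses
products, whence an isomorphism of `A` onto the corner inside `(End_A (⊕ p i))ᵐᵒᵖ`.
-/

lemma psum_omegaC (d m : ℕ) : psum (omegaC d) m = min m d := by
  have h : (Finset.range m).filter (· < d) = Finset.range (min m d) := by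
    ext r; simp only [Finset.mem_filter, Finset.mem_range]; omega
  simp [psum, omegaC, Finset.sum_boole, h]

lemma colorOf_omegaC {n d i : ℕ} (hi : i < d) (hn : d ≤ n) : colorOf n (omegaC d) i = i := by
  have h : (Finset.range n).filter (fun s => psum (omegaC d) (s + 1) ≤ i) = Finset.range i := by
    ext s; simp only [Finset.mem_filter, Finset.mem_range, psum_omegaC]; omega
  simp [colorOf, h]

lemma young_omegaC_eq_bot {n d : ℕ} (hn : d ≤ n) : young n (omegaC d) d = ⊥ := by
  refine (Subgroup.eq_bot_iff_forall _).2 fun g hg => Equiv.ext fun i => Fin.ext ?_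
  simpa [colorOf_omegaC (g i).2 hn, colorOf_omegaC i.2 hn] using hg i

lemma xEl_omegaC (k : Type) [CommRing k] {n d : ℕ} (hn : d ≤ n) : xEl k n (omegaC d) d = 1 := by
  simp [xEl, young_omegaC_eq_bot hn, Finset.filter_eq', MonoidAlgebra.one_def]

lemma Mmod_omegaC_eq_top (k : Type) [CommRing k] {n d : ℕ} (hn : d ≤ n) :
    Mmod k n (omegaC d) d = ⊤ := by
  rw [Mmod, xEl_omegaC k hn]
  exact Ideal.span_singleton_one

section RightMulAt

variable {k A ι : Type*} [CommRing k] [Ring A] [Algebra k A] [DecidableEq ι]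
  {p : ι → Submodule A A} {i₀ : ι}

def rightMulAt (hp : p i₀ = ⊤) (x : A) : Module.End A (Π i, p i) where
  toFun v i := if h : i = i₀ then ⟨v i * x, by subst h; simp [hp]⟩ else 0
  map_add' v w := by
    funext i
    by_cases h : i = i₀ <;> simp [h, add_mul]
  map_smul' a v := by
    funext i
    by_cases h : i = i₀ <;> simp [h, smul_eq_mul, mul_assoc]

variable (hp : p i₀ = ⊤)

lemma rightMulAt_apply (x : A) (v : Π i, p i) (i : ι) :
    (rightMulAt hp x v i : A) = if i = i₀ then (v i₀ : A) * x else 0 := by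
  by_cases h : i = i₀
  · subst h; simp [rightMulAt]
  · simp [rightMulAt, h]

lemma rightMulAt_add (x y : A) : rightMulAt hp (x + y) = rightMulAt hp x + rightMulAt hp y := by
  ext v i
  by_cases h : i = i₀ <;> simp [rightMulAt_apply, h, mul_add]

lemma rightMulAt_smul (c : k) (x : A) :
    rightMulAt hp (c • x) = c • rightMulAt hp x := by
  ext v i
  by_cases h : i = i₀ <;> simp [rightMulAt_apply, h]

lemma rightMulAt_mul (x y : A) : rightMulAt hp (x * y) = rightMulAt hp y * rightMulAt hp x := by
  ext v i
  by_cases h : i = i₀ <;> simp [rightMulAt_apply, h, mul_assoc]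

def unitAt : Π i, p i := fun i => if h : i = i₀ then ⟨1, by subst h; simp [hp]⟩ else 0

lemma rightMulAt_unitAt (x : A) : (rightMulAt hp x (unitAt hp) i₀ : A) = x := by
  simp [rightMulAt_apply, unitAt]

lemma rightMulAt_injective : Function.Injective (rightMulAt hp) := fun x y h => by
  simpa [rightMulAt_unitAt] using congrArg (fun f => (f (unitAt hp) i₀ : A)) h

lemma rightMulAt_one_apply (v : Π i, p i) : rightMulAt hp 1 v = (v i₀ : A) • unitAt hp := by
  ext i
  by_cases h : i = i₀
  · subst h; simp [rightMulAt_apply, unitAt]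
  · simp [rightMulAt_apply, unitAt, h]

lemma eq_rightMulAt_of_corner {f : Module.End A (Π i, p i)}
    (hf : rightMulAt hp 1 * f * rightMulAt hp 1 = f) :
    f = rightMulAt hp (f (unitAt hp) i₀) := by
  ext v i
  have hfv : f v = (v i₀ : A) • rightMulAt hp 1 (f (unitAt hp)) := by
    conv_lhs => rw [← hf]
    rw [Module.End.mul_apply, Module.End.mul_apply, rightMulAt_one_apply hp v, map_smul, map_smul]
  rw [hfv]
  by_cases h : i = i₀
  · subst h; simp [rightMulAt_apply]
  · simp [rightMulAt_apply, h]

variable (k) in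
def rightMulAtOp : A →ₗ[k] (Module.End A (Π i, p i))ᵐᵒᵖ where
  toFun x := MulOpposite.op (rightMulAt hp x)
  map_add' x y := by rw [rightMulAt_add, MulOpposite.op_add]
  map_smul' c x := by rw [rightMulAt_smul, MulOpposite.op_smul, RingHom.id_apply]

variable (k) in
lemma rightMulAtOp_apply (x : A) : rightMulAtOp k hp x = MulOpposite.op (rightMulAt hp x) := rfl

variable (k) in
lemma range_rightMulAtOp :
    Set.range (rightMulAtOp k hp) =
      {z | MulOpposite.op (rightMulAt hp 1) * z * MulOpposite.op (rightMulAt hp 1) = z} := by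
  ext z
  induction z using MulOpposite.rec' with | h f => ?_
  simp only [Set.mem_range, rightMulAtOp_apply, MulOpposite.op_inj, Set.mem_ofPred_eq,
    ← MulOpposite.op_mul, ← mul_assoc]
  refine ⟨?_, fun hf => ⟨_, (eq_rightMulAt_of_corner hp hf).symm⟩⟩
  rintro ⟨x, rfl⟩
  rw [← rightMulAt_mul, ← rightMulAt_mul, mul_one, one_mul]

end RightMulAt

theorem stmt11_general (k : Type) [Field k] (n d : ℕ) (hnd : d ≤ n) :
    ∃ κ : MonoidAlgebra k (Equiv.Perm (Fin d)) →ₗ[k]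
        (Module.End (MonoidAlgebra k (Equiv.Perm (Fin d))) (MMs k n d))ᵐᵒᵖ,
      -- `κ` is an isomorphism of `k`-algebras onto the corner `ξ_{ω_d} S(n,d) ξ_{ω_d}`:
      Function.Injective κ ∧
      (∀ x y, κ (x * y) = κ x * κ y) ∧
      κ 1 = MulOpposite.op (xiIdem k n d (omegaElt n d hnd)) ∧
      Set.range κ =
        {z | MulOpposite.op (xiIdem k n d (omegaElt n d hnd)) * z *
            MulOpposite.op (xiIdem k n d (omegaElt n d hnd)) = z} ∧
      -- and `κ g = ξ^g_{ω_d,ω_d}`: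
      ∀ g : Equiv.Perm (Fin d), ∀ v : MMs k n d, ∀ ρ : CompT n d,
        ((MulOpposite.unop (κ (MonoidAlgebra.of k (Equiv.Perm (Fin d)) g))) v ρ :
            MonoidAlgebra k (Equiv.Perm (Fin d))) =
          if ρ = omegaElt n d hnd then
            (v (omegaElt n d hnd) : MonoidAlgebra k (Equiv.Perm (Fin d))) *
              MonoidAlgebra.of k (Equiv.Perm (Fin d)) g
          else 0 := by
  let p : CompT n d → Submodule (MonoidAlgebra k (Equiv.Perm (Fin d))) _ :=
    fun ν => Mmod k n ν.1 d
  have hp : p (omegaElt n d hnd) = ⊤ := Mmod_omegaC_eq_top k hnd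
  have hξ : xiIdem k n d (omegaElt n d hnd) = rightMulAt hp 1 := by
    ext v ρ
    by_cases h : ρ = omegaElt n d hnd
    · subst h; simp [xiIdem, rightMulAt_apply]
    · simp [xiIdem, rightMulAt_apply, h]
  refine ⟨rightMulAtOp k hp, MulOpposite.op_injective.comp (rightMulAt_injective hp),
    fun x y => congrArg MulOpposite.op (rightMulAt_mul hp x y), by rw [hξ]; rfl,
    by rw [hξ]; exact range_rightMulAtOp k hp, fun g v ρ => rightMulAt_apply hp _ v ρ⟩

theorem stmt11 (k : Type) [Field k] (n d : ℕ) (hd : 1 ≤ d) (hnd : d ≤ n) :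
    ∃ κ : MonoidAlgebra k (Equiv.Perm (Fin d)) →ₗ[k]
        (Module.End (MonoidAlgebra k (Equiv.Perm (Fin d))) (MMs k n d))ᵐᵒᵖ,
      -- `κ` is an isomorphism of `k`-algebras onto the corner `ξ_{ω_d} S(n,d) ξ_{ω_d}`:
      Function.Injective κ ∧
      (∀ x y, κ (x * y) = κ x * κ y) ∧
      κ 1 = MulOpposite.op (xiIdem k n d (omegaElt n d hnd)) ∧
      Set.range κ =
        {z | MulOpposite.op (xiIdem k n d (omegaElt n d hnd)) * z *
            MulOpposite.op (xiIdem k n d (omegaElt n d hnd)) = z} ∧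
      -- and `κ g = ξ^g_{ω_d,ω_d}`:
      ∀ g : Equiv.Perm (Fin d), ∀ v : MMs k n d, ∀ ρ : CompT n d,
        ((MulOpposite.unop (κ (MonoidAlgebra.of k (Equiv.Perm (Fin d)) g))) v ρ :
            MonoidAlgebra k (Equiv.Perm (Fin d))) =
          if ρ = omegaElt n d hnd then
            (v (omegaElt n d hnd) : MonoidAlgebra k (Equiv.Perm (Fin d))) *
              MonoidAlgebra.of k (Equiv.Perm (Fin d)) g
          else 0 :=
  stmt11_general k n d hnd
end
end

section
/- Let F be a field, d ≥ 1, and λ ∈ P(d) a partition. In the group algebra F𝔖_d the left ideal F𝔖_d·x_λ·u_{λ'}·y_{λ'} is nonzero, where u_{λ'} is the unique element of ^λD^{λ'} with 𝔖_λ ∩ u_{λ'}𝔖_{λ'}u_{λ'}⁻¹ = {1}; equivalently, for any faithful right F𝔖_d-module M, the subspace M·x_λ·u_{λ'}·y_{λ'} is nonzero. -/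
open Finset
open scoped Classical

noncomputable section

/-
The coefficient of `u` in `x_λ u y_{λ'}` is a signed count of the pairs `(a, b) ∈ 𝔖_λ × 𝔖_{λ'}`
with `a u b = u`. For such a pair `u b u⁻¹ = a⁻¹ ∈ 𝔖_λ ∩ u 𝔖_{λ'} u⁻¹ = 1`, so only `(1, 1)`
contributes and the coefficient is `1`. A nonzero element of a ring acts nontrivially on every
faithful module.
-/

namespace MonoidAlgebra

variable {k G : Type*} [Semiring k] [Group G]

theorem coeff_mul_of_mul_self {H K : Subgroup G} {x y : MonoidAlgebra k G} {u : G}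
    (hx : ∀ g, x.coeff g ≠ 0 → g ∈ H) (hy : ∀ g, y.coeff g ≠ 0 → g ∈ K)
    (hHK : ∀ g ∈ K, u * g * u⁻¹ ∈ H → g = 1) :
    (x * of k G u * y).coeff u = x.coeff 1 * y.coeff 1 := by
  rw [coeff_mul_apply_right, Finsupp.sum_eq_single 1]
  · simp [of_apply]
  · intro b hb hb1
    suffices x.coeff (u * b⁻¹ * u⁻¹) = 0 by simp [of_apply, this]
    by_contra hxb
    exact hb1 (inv_eq_one.mp (hHK _ (K.inv_mem (hy b hb)) (hx _ hxb)))
  · simp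

end MonoidAlgebra

theorem exists_smul_ne_zero_of_faithfulSMul {R M : Type*} [Zero R] [Zero M] [SMulWithZero R M]
    [FaithfulSMul R M] {r : R} (hr : r ≠ 0) : ∃ m : M, r • m ≠ 0 := by
  by_contra! h
  exact hr (eq_of_smul_eq_smul fun m => by rw [h m, zero_smul])

theorem coeff_xEl (k : Type) [CommRing k] (n : ℕ) (c : ℕ → ℕ) (d : ℕ)
    (g : Equiv.Perm (Fin d)) :
    (xEl k n c d).coeff g = if g ∈ young n c d then 1 else 0 := by
  simp [xEl, MonoidAlgebra.coeff_sum, MonoidAlgebra.of_apply, Finsupp.single_apply]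

theorem coeff_yEl (k : Type) [CommRing k] (n : ℕ) (c : ℕ → ℕ) (d : ℕ)
    (g : Equiv.Perm (Fin d)) :
    (yEl k n c d).coeff g = if g ∈ young n c d then ((Equiv.Perm.sign g : ℤ) : k) else 0 := by
  simp [yEl, MonoidAlgebra.coeff_sum, MonoidAlgebra.of_apply, Finsupp.single_apply]

theorem stmt12_general (F : Type) [Field F] (d n : ℕ) (c : ℕ → ℕ)
    (u : Equiv.Perm (Fin d))
    (hu : IsMinDC d n c d (transp n c) u ∧
      ∀ g ∈ young d (transp n c) d, u * g * u⁻¹ ∈ young n c d → g = 1) :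
    xEl F n c d * MonoidAlgebra.of F (Equiv.Perm (Fin d)) u * yEl F d (transp n c) d ≠ 0
    ∧ ∀ (M : Type) [AddCommGroup M]
        [Module (MonoidAlgebra F (Equiv.Perm (Fin d)))ᵐᵒᵖ M]
        [FaithfulSMul (MonoidAlgebra F (Equiv.Perm (Fin d)))ᵐᵒᵖ M],
        ∃ m : M,
          (MulOpposite.op
            (xEl F n c d * MonoidAlgebra.of F (Equiv.Perm (Fin d)) u *
              yEl F d (transp n c) d)) • m ≠ 0 := by
  have hx : ∀ g, (xEl F n c d).coeff g ≠ 0 → g ∈ young n c d := fun g hg =>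
    by_contra fun h => hg (by simp [coeff_xEl, h])
  have hy : ∀ g, (yEl F d (transp n c) d).coeff g ≠ 0 → g ∈ young d (transp n c) d :=
    fun g hg => by_contra fun h => hg (by simp [coeff_yEl, h])
  have hcoeff : (xEl F n c d * MonoidAlgebra.of F (Equiv.Perm (Fin d)) u *
      yEl F d (transp n c) d).coeff u = 1 := by
    rw [MonoidAlgebra.coeff_mul_of_mul_self hx hy hu.2]
    simp [coeff_xEl, coeff_yEl]
  have hne : xEl F n c d * MonoidAlgebra.of F (Equiv.Perm (Fin d)) u *
      yEl F d (transp n c) d ≠ 0 := fun h => by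
    rw [h] at hcoeff
    simp at hcoeff
  exact ⟨hne, fun M _ _ _ =>
    exists_smul_ne_zero_of_faithfulSMul ((MulOpposite.op_ne_zero_iff _).mpr hne)⟩

theorem stmt12 (F : Type) [Field F] (d n : ℕ) (c : ℕ → ℕ) (hp : IsPartitionC n c d)
    (u : Equiv.Perm (Fin d))
    (hu : IsMinDC d n c d (transp n c) u ∧
      ∀ g ∈ young d (transp n c) d, u * g * u⁻¹ ∈ young n c d → g = 1) :
    xEl F n c d * MonoidAlgebra.of F (Equiv.Perm (Fin d)) u * yEl F d (transp n c) d ≠ 0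
    ∧ ∀ (M : Type) [AddCommGroup M]
        [Module (MonoidAlgebra F (Equiv.Perm (Fin d)))ᵐᵒᵖ M]
        [FaithfulSMul (MonoidAlgebra F (Equiv.Perm (Fin d)))ᵐᵒᵖ M],
        ∃ m : M,
          (MulOpposite.op
            (xEl F n c d * MonoidAlgebra.of F (Equiv.Perm (Fin d)) u *
              yEl F d (transp n c) d)) • m ≠ 0 :=
  stmt12_general F d n c u hu
end
end

section
/- Let ≼ be a convex preorder on the positive root system Φ₊ of an affine Kac–Moody root system, and let β ∈ Φ₊ be imaginary (a multiple of the null root δ). If β = ∑_{a=1}^{b} γ_a with all γ_a ∈ Φ₊ and either γ_a ≼ β for all a, or γ_a ≽ β for all a, then every γ_a is imaginary. -/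
/-!
With `s` the slope `χ β / ht β`, the functional `v ↦ χ v - s * ht v` vanishes on `β = ∑ γ_a`
and has constant sign on the `γ_a`, so it vanishes on each of them. Hence
`χ (γ_a) = χ ((ht γ_a / ht β) • β)`, and injectivity of `χ` makes `γ_a` a positive multiple
of `β`, hence of `δ`.
-/

open Finset

namespace ConvexPreorder

variable {V : Type*} [AddCommGroup V] [Module ℚ V]

/-- The quantity `χ(v)/ht(v)` whose comparison defines the convex preorder. -/
noncomputable def slope (χ : V →ₗ[ℚ] ℝ) (ht : V →ₗ[ℚ] ℚ) (v : V) : ℝ :=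
  χ v / (ht v : ℝ)

lemma slope_neg (χ : V →ₗ[ℚ] ℝ) (ht : V →ₗ[ℚ] ℚ) (v : V) :
    slope (-χ) ht v = -slope χ ht v := by
  simp only [slope, LinearMap.neg_apply, neg_div]

lemma map_eq_slope_mul_of_forall_slope_le {ι : Type*} [Fintype ι] (χ : V →ₗ[ℚ] ℝ)
    (ht : V →ₗ[ℚ] ℚ) {β : V} (hβ : 0 < ht β) {γ : ι → V} (hγ : ∀ a, 0 < ht (γ a))
    (hsum : ∑ a, γ a = β) (hle : ∀ a, slope χ ht (γ a) ≤ slope χ ht β) (a : ι) :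
    χ (γ a) = slope χ ht β * ht (γ a) := by
  have hle' : ∀ i ∈ univ, χ (γ i) ≤ slope χ ht β * ht (γ i) := fun i _ =>
    (div_le_iff₀ (by exact_mod_cast hγ i)).mp (hle i)
  have hsum' : ∑ i, χ (γ i) = ∑ i, slope χ ht β * ht (γ i) := by
    have hβR : (ht β : ℝ) ≠ 0 := by exact_mod_cast hβ.ne'
    rw [← mul_sum, ← map_sum, ← Rat.cast_sum, ← map_sum, hsum, slope,
      div_mul_cancel₀ _ hβR]
  exact (sum_eq_sum_iff_of_le hle').mp hsum' a (mem_univ a)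

lemma eq_smul_of_map_eq_slope_mul {χ : V →ₗ[ℚ] ℝ} (hχ : Function.Injective χ)
    (ht : V →ₗ[ℚ] ℚ) {β v : V} (hβ : ht β ≠ 0) (h : χ v = slope χ ht β * ht v) :
    v = (ht v / ht β) • β := by
  apply hχ
  rw [h, map_smul, Rat.smul_def, slope, Rat.cast_div]
  field_simp [(by exact_mod_cast hβ : (ht β : ℝ) ≠ 0)]

lemma eq_smul_of_slopes_one_side {ι : Type*} [Fintype ι] {χ : V →ₗ[ℚ] ℝ}
    (hχ : Function.Injective χ) (ht : V →ₗ[ℚ] ℚ) {β : V} (hβ : 0 < ht β) {γ : ι → V}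
    (hγ : ∀ a, 0 < ht (γ a)) (hsum : ∑ a, γ a = β)
    (hcomp : (∀ a, slope χ ht (γ a) ≤ slope χ ht β) ∨ (∀ a, slope χ ht β ≤ slope χ ht (γ a)))
    (a : ι) : γ a = (ht (γ a) / ht β) • β := by
  rcases hcomp with hle | hge
  · exact eq_smul_of_map_eq_slope_mul hχ ht hβ.ne'
      (map_eq_slope_mul_of_forall_slope_le χ ht hβ hγ hsum hle a)
  · have hle : ∀ a, slope (-χ) ht (γ a) ≤ slope (-χ) ht β := fun a => by
      simpa only [slope_neg, neg_le_neg_iff] using hge a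
    exact eq_smul_of_map_eq_slope_mul (neg_injective.comp hχ) ht hβ.ne'
      (map_eq_slope_mul_of_forall_slope_le (-χ) ht hβ hγ hsum hle a)

end ConvexPreorder

open ConvexPreorder in
theorem stmt16 (V : Type u) [AddCommGroup V] [Module ℚ V]
    (Φpos : Set V) (χ : V →ₗ[ℚ] ℝ) (hχ : Function.Injective χ)
    (ht : V →ₗ[ℚ] ℚ) (hpos : ∀ β ∈ Φpos, 0 < ht β)
    (δ : V) (β : V) (hβΦ : β ∈ Φpos) (hβim : ∃ c : ℚ, 0 < c ∧ β = c • δ)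
    (b : ℕ) (γ : Fin b → V) (hγ : ∀ a, γ a ∈ Φpos) (hsum : ∑ a, γ a = β)
    (hcomp :
      (∀ a, χ (γ a) / ((ht (γ a) : ℚ) : ℝ) ≤ χ β / ((ht β : ℚ) : ℝ)) ∨
      (∀ a, χ β / ((ht β : ℚ) : ℝ) ≤ χ (γ a) / ((ht (γ a) : ℚ) : ℝ))) :
    ∀ a, ∃ c : ℚ, 0 < c ∧ γ a = c • δ := by
  obtain ⟨c, hc, hβδ⟩ := hβim
  have hβ : 0 < ht β := hpos β hβΦ
  intro a
  have hγa : 0 < ht (γ a) := hpos _ (hγ a)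
  refine ⟨ht (γ a) / ht β * c, by positivity, ?_⟩
  calc γ a = (ht (γ a) / ht β) • β :=
        eq_smul_of_slopes_one_side hχ ht hβ (fun a => hpos _ (hγ a)) hsum hcomp a
    _ = (ht (γ a) / ht β * c) • δ := by rw [hβδ, smul_smul]
end

section
/- Let χ: ℚΦ → ℝ be an injective ℚ-linear map on the rational span of an affine root system Φ. Define β ≼ γ if and only if χ(β)/ht(β) ≤ χ(γ)/ht(γ) for positive roots β, γ (ht = height). Then ≼ is a convex preorder on Φ₊: any two positive roots are comparable; if β ≼ γ and β+γ ∈ Φ₊ then β ≼ β+γ ≼ γ; and β ≼ γ ≼ β iff β and γ are proportional. -/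
/-!
Statement 17: Let `χ : ℚΦ → ℝ` be an injective ℚ-linear map and `ht` the height
functional (positive on positive roots).  Define `β ≼ γ ⟺ χ(β)/ht(β) ≤ χ(γ)/ht(γ)`.
Then `≼` is a convex preorder on the set `Φ₊` of positive roots: it is reflexive and
transitive, any two positive roots are comparable, if `β ≼ γ` and `β + γ ∈ Φ₊` then
`β ≼ β + γ ≼ γ`, and `β ≼ γ ≼ β` holds iff `β` and `γ` are proportional.
-/

universe u

theorem stmt17 (V : Type u) [AddCommGroup V] [Module ℚ V]
    (Φpos : Set V) (χ : V →ₗ[ℚ] ℝ) (hχ : Function.Injective χ)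
    (ht : V →ₗ[ℚ] ℚ) (hpos : ∀ β ∈ Φpos, 0 < ht β) :
    -- reflexivity
    (∀ β ∈ Φpos, χ β / ((ht β : ℚ) : ℝ) ≤ χ β / ((ht β : ℚ) : ℝ)) ∧
    -- transitivity
    (∀ β ∈ Φpos, ∀ γ ∈ Φpos, ∀ η ∈ Φpos,
      χ β / ((ht β : ℚ) : ℝ) ≤ χ γ / ((ht γ : ℚ) : ℝ) →
      χ γ / ((ht γ : ℚ) : ℝ) ≤ χ η / ((ht η : ℚ) : ℝ) →
      χ β / ((ht β : ℚ) : ℝ) ≤ χ η / ((ht η : ℚ) : ℝ)) ∧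
    -- (1) any two positive roots are comparable
    (∀ β ∈ Φpos, ∀ γ ∈ Φpos,
      χ β / ((ht β : ℚ) : ℝ) ≤ χ γ / ((ht γ : ℚ) : ℝ) ∨
      χ γ / ((ht γ : ℚ) : ℝ) ≤ χ β / ((ht β : ℚ) : ℝ)) ∧
    -- (2) convexity
    (∀ β ∈ Φpos, ∀ γ ∈ Φpos,
      χ β / ((ht β : ℚ) : ℝ) ≤ χ γ / ((ht γ : ℚ) : ℝ) → β + γ ∈ Φpos →
      χ β / ((ht β : ℚ) : ℝ) ≤ χ (β + γ) / ((ht (β + γ) : ℚ) : ℝ) ∧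
      χ (β + γ) / ((ht (β + γ) : ℚ) : ℝ) ≤ χ γ / ((ht γ : ℚ) : ℝ)) ∧
    -- (3) `β ≼ γ ≼ β` iff `β`, `γ` are proportional
    (∀ β ∈ Φpos, ∀ γ ∈ Φpos,
      (χ β / ((ht β : ℚ) : ℝ) ≤ χ γ / ((ht γ : ℚ) : ℝ) ∧
        χ γ / ((ht γ : ℚ) : ℝ) ≤ χ β / ((ht β : ℚ) : ℝ)) ↔
      ∃ c : ℚ, 0 < c ∧ γ = c • β) := by
  refine ⟨fun β _ => le_refl _, fun β _ γ _ η _ h1 h2 => le_trans h1 h2,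
    fun β _ γ _ => le_total _ _, ?_, ?_⟩
  · intro β hβ γ hγ hle hsum
    have hb : (0:ℝ) < ((ht β : ℚ) : ℝ) := by exact_mod_cast hpos β hβ
    have hd : (0:ℝ) < ((ht γ : ℚ) : ℝ) := by exact_mod_cast hpos γ hγ
    have hχadd : χ (β + γ) = χ β + χ γ := map_add χ β γ
    have hhtadd : ((ht (β + γ) : ℚ) : ℝ) = ((ht β : ℚ) : ℝ) + ((ht γ : ℚ) : ℝ) := by
      push_cast [map_add]; ring
    rw [div_le_div_iff₀ hb hd] at hle
    constructor
    · rw [hχadd, hhtadd, div_le_div_iff₀ hb (by linarith)]; nlinarith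
    · rw [hχadd, hhtadd, div_le_div_iff₀ (by linarith) hd]; nlinarith
  · intro β hβ γ hγ
    have hbq := hpos β hβ
    have hdq := hpos γ hγ
    have hb : (0:ℝ) < ((ht β : ℚ) : ℝ) := by exact_mod_cast hbq
    have hd : (0:ℝ) < ((ht γ : ℚ) : ℝ) := by exact_mod_cast hdq
    constructor
    · rintro ⟨h1, h2⟩
      have heq : χ β / ((ht β : ℚ) : ℝ) = χ γ / ((ht γ : ℚ) : ℝ) := le_antisymm h1 h2
      have hcross : ((ht γ : ℚ) : ℝ) * χ β = ((ht β : ℚ) : ℝ) * χ γ := by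
        field_simp at heq; linarith
      have hker : χ (ht γ • β) = χ (ht β • γ) := by
        rw [map_smul, map_smul, Rat.smul_def, Rat.smul_def]
        exact hcross
      have hv : ht γ • β = ht β • γ := hχ hker
      refine ⟨ht γ / ht β, div_pos hdq hbq, ?_⟩
      rw [div_eq_mul_inv, mul_comm, mul_smul, hv, ← mul_smul,
        inv_mul_cancel₀ (ne_of_gt hbq), one_smul]
    · rintro ⟨c, hc, rfl⟩
      have hχc : χ (c • β) = (c : ℝ) * χ β := by rw [map_smul, Rat.smul_def]
      have hhtc : ((ht (c • β) : ℚ) : ℝ) = (c : ℝ) * ((ht β : ℚ) : ℝ) := by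
        rw [map_smul, smul_eq_mul]; push_cast; ring
      have hc' : (0:ℝ) < (c:ℝ) := by exact_mod_cast hc
      rw [hχc, hhtc, mul_div_mul_left _ _ (ne_of_gt hc')]
      exact ⟨le_refl _, le_refl _⟩
end

section
/- Let F be a field, λ ∈ P(d) and μ ∈ Λ(d). Then the permutation-module Hom space satisfies: k_{𝔖_μ} ⊗_{k𝔖_μ} k𝔖_d · y_λ = 0 unless μ ⊴ λ' in the dominance order, and for μ = λ' the space k_{𝔖_{λ'}} ⊗_{k𝔖_{λ'}} k𝔖_d · y_λ is one-dimensional. -/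
open Finset
open scoped Classical

noncomputable section

/-!
If distinct `p, q` lie in one block of `λ` while `g p, g q` lie in one block of `μ`, the
transposition of `g p` and `g q` pairs off the terms of `x_μ g y_λ` with opposite signs, so
`x_μ g y_λ = 0`. Otherwise `g` is transverse: it sends each row of `λ` to a set meeting every block
of `μ` at most once, so at most `min λ_s t` points of row `s` go to the first `t` blocks of `μ`;
summing over `s` gives `μ₁ + ⋯ + μ_t ≤ λ'₁ + ⋯ + λ'_t`. For `μ = λ'` all these bounds are
attained, which forces `g` to send row `s` into the first `λ_s` blocks of `λ'`; then `g` lies in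
the double coset `𝔖_{λ'} w 𝔖_λ` of the permutation `w` that renumbers the Young diagram from rows
to columns. Finally `x_{λ'} w y_λ ≠ 0`, since its coefficient at the transverse `w` is `1`, so
`x_{λ'} F𝔖_d y_λ` is the line through it.
-/

section Compositions

variable {n d : ℕ} {c : ℕ → ℕ}

lemma psum_mono (c : ℕ → ℕ) : Monotone (psum c) := fun _ _ h =>
  Finset.sum_le_sum_of_subset (Finset.range_subset_range.mpr h)

lemma psum_succ (c : ℕ → ℕ) (s : ℕ) : psum c (s + 1) = psum c s + c s :=
  Finset.sum_range_succ c s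

lemma IsComposition.psum_of_le (h : IsComposition n c d) {t : ℕ} (ht : n ≤ t) :
    psum c t = d := by
  rw [← h.2, psum, psum, ← Finset.sum_range_add_sum_Ico c ht,
    Finset.sum_eq_zero fun s hs => h.1 s (Finset.mem_Ico.mp hs).1, add_zero]

lemma IsComposition.psum_le (h : IsComposition n c d) (t : ℕ) : psum c t ≤ d := by
  rcases le_total t n with ht | ht
  · exact h.2 ▸ psum_mono c ht
  · exact (h.psum_of_le ht).le

lemma IsComposition.le (h : IsComposition n c d) (s : ℕ) : c s ≤ d := by
  have := h.psum_le (s + 1)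
  rw [psum_succ] at this
  omega

lemma le_colorOf {t i : ℕ} (htn : t ≤ n) (hti : psum c t ≤ i) : t ≤ colorOf n c i := by
  have hsub : Finset.range t ⊆ (Finset.range n).filter fun s => psum c (s + 1) ≤ i :=
    fun s hs => by
      simp only [Finset.mem_range, Finset.mem_filter] at hs ⊢
      exact ⟨by omega, (psum_mono c hs).trans hti⟩
  simpa [colorOf] using Finset.card_le_card hsub

lemma colorOf_lt_of_lt_psum {t i : ℕ} (hit : i < psum c t) : colorOf n c i < t := by
  have hsub : ((Finset.range n).filter fun s => psum c (s + 1) ≤ i) ⊆ Finset.range (t - 1) :=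
    fun s hs => by
      simp only [Finset.mem_range, Finset.mem_filter] at hs ⊢
      by_contra hst
      have := psum_mono c (show t ≤ s + 1 by omega)
      omega
  have ht : t ≠ 0 := by rintro rfl; simp [psum] at hit
  have := Finset.card_le_card hsub
  rw [Finset.card_range] at this
  unfold colorOf
  omega

lemma IsComposition.colorOf_lt_iff (h : IsComposition n c d) {i : ℕ} (hi : i < d) (t : ℕ) :
    colorOf n c i < t ↔ i < psum c t := by
  refine ⟨fun hlt => ?_, colorOf_lt_of_lt_psum⟩
  by_contra! hti
  rcases le_total t n with htn | htn
  · exact (le_colorOf htn hti).not_gt hlt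
  · exact hi.not_ge (h.psum_of_le htn ▸ hti)

lemma IsComposition.colorOf_eq_iff (h : IsComposition n c d) {i : ℕ} (hi : i < d) (s : ℕ) :
    colorOf n c i = s ↔ psum c s ≤ i ∧ i < psum c (s + 1) := by
  have h1 := h.colorOf_lt_iff hi s
  have h2 := h.colorOf_lt_iff hi (s + 1)
  omega

lemma IsComposition.colorOf_lt (h : IsComposition n c d) {i : ℕ} (hi : i < d) :
    colorOf n c i < n :=
  colorOf_lt_of_lt_psum (h.2 ▸ hi)

lemma IsComposition.card_colorOf_lt (h : IsComposition n c d) (t : ℕ) :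
    #{i : Fin d | colorOf n c i < t} = psum c t := by
  rw [Finset.filter_congr fun (i : Fin d) _ => h.colorOf_lt_iff i.isLt t,
    Fin.card_filter_val_lt, min_eq_right (h.psum_le t)]

lemma IsComposition.card_colorOf_eq (h : IsComposition n c d) (s : ℕ) :
    #{i : Fin d | colorOf n c i = s} = c s := by
  have hsplit : Finset.univ.filter (fun i : Fin d => colorOf n c i = s) =
      Finset.univ.filter (fun i : Fin d => colorOf n c i < s + 1) \
        Finset.univ.filter (fun i : Fin d => colorOf n c i < s) := by
    ext i
    simp only [Finset.mem_filter, Finset.mem_sdiff, Finset.mem_univ, true_and]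
    omega
  rw [hsplit, Finset.card_sdiff_of_subset (Finset.monotone_filter_right _ fun i hi => by omega),
    h.card_colorOf_lt, h.card_colorOf_lt, psum_succ, Nat.add_sub_cancel_left]

end Compositions

section Transpose

variable {n d : ℕ} {c : ℕ → ℕ}

lemma psum_transp (n : ℕ) (c : ℕ → ℕ) (t : ℕ) :
    psum (transp n c) t = ∑ r ∈ Finset.range n, min (c r) t := by
  simp only [psum, transp, Finset.card_filter]
  rw [Finset.sum_comm]
  refine Finset.sum_congr rfl fun r _ => ?_
  rw [← Finset.card_filter, ← Finset.card_range (min (c r) t)]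
  congr 1
  ext i
  simp only [Finset.mem_filter, Finset.mem_range]
  omega

lemma IsPartitionC.isComposition_transp (h : IsPartitionC n c d) :
    IsComposition d (transp n c) d := by
  refine ⟨fun s hs => ?_, ?_⟩
  · refine Finset.card_eq_zero.mpr (Finset.filter_eq_empty_iff.mpr fun r _ => ?_)
    have := h.1.le r
    omega
  · rw [psum_transp]
    exact (Finset.sum_congr rfl fun r _ => min_eq_left (h.1.le r)).trans h.1.2

lemma IsPartitionC.lt_transp (h : IsPartitionC n c d) {s k : ℕ} (hs : s < n) (hk : k < c s) :
    s < transp n c k := by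
  have hsub : Finset.range (s + 1) ⊆ (Finset.range n).filter fun r => k < c r := fun r hr => by
    simp only [Finset.mem_range, Finset.mem_filter] at hr ⊢
    exact ⟨by omega, hk.trans_le (h.2 r s (by omega))⟩
  simpa [transp] using Finset.card_le_card hsub

end Transpose

section Young

variable {n d : ℕ} {c : ℕ → ℕ}

lemma mul_inv_mem_young {u v : Equiv.Perm (Fin d)}
    (h : ∀ p, colorOf n c (u p) = colorOf n c (v p)) : u * v⁻¹ ∈ young n c d := fun i => by
  simpa using h (v⁻¹ i)

lemma exists_mem_young_coe_eq {f : Fin d → Fin d} (hf : Function.Injective f)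
    (hcol : ∀ p, colorOf n c (f p) = colorOf n c p) : ∃ b ∈ young n c d, ⇑b = f :=
  ⟨Equiv.ofBijective f (Finite.injective_iff_bijective.mp hf), hcol, rfl⟩

lemma swap_mem_young {i j : Fin d} (h : colorOf n c i = colorOf n c j) :
    Equiv.swap i j ∈ young n c d := fun p => by
  rw [Equiv.swap_apply_def]
  split_ifs <;> simp_all

end Young

section Transverse

variable {d nμ n : ℕ} {cμ c : ℕ → ℕ}

/-- `g` maps each `𝔖_λ`-block to a set meeting each `𝔖_μ`-block at most once. -/
def Transverse (nμ : ℕ) (cμ : ℕ → ℕ) (n : ℕ) (c : ℕ → ℕ) (g : Equiv.Perm (Fin d)) : Prop :=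
  Function.Injective fun p : Fin d => (colorOf n c p, colorOf nμ cμ (g p))

lemma Transverse.eq_one_of_mul_mul_eq {g a b : Equiv.Perm (Fin d)}
    (hg : Transverse nμ cμ n c g) (ha : a ∈ young nμ cμ d) (hb : b ∈ young n c d) (h : a * g * b = g) : a = 1 ∧ b = 1 := by
  have hb1 : b = 1 := Equiv.ext fun p => hg <| by
    have hgb : g (b p) = a⁻¹ (g p) := by
      conv_rhs => rw [← h]
      simp [Equiv.Perm.mul_apply]
    simp only [Prod.mk.injEq, Equiv.Perm.one_apply]
    exact ⟨hb p, hgb ▸ inv_mem ha (g p)⟩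
  subst hb1
  exact ⟨by simpa using h, rfl⟩

end Transverse

lemma mul_mul_mem_of_forall_of_mem {k G : Type*} [CommSemiring k] [Monoid G]
    (P : Submodule k (MonoidAlgebra k G)) {x y : MonoidAlgebra k G}
    (h : ∀ g, x * MonoidAlgebra.of k G g * y ∈ P) (a : MonoidAlgebra k G) : x * a * y ∈ P :=
  MonoidAlgebra.induction_on (motive := fun a => x * a * y ∈ P) a h
    (fun a b ha hb => by rw [mul_add, add_mul]; exact P.add_mem ha hb)
    (fun r a ha => by rw [mul_smul_comm, smul_mul_assoc]; exact P.smul_mem r ha)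

section GroupAlgebra

open MonoidAlgebra

variable {k : Type} [CommRing k] {d nμ n : ℕ} {cμ c : ℕ → ℕ}

lemma xEl_mul_of {h : Equiv.Perm (Fin d)} (hh : h ∈ young n c d) :
    xEl k n c d * of k _ h = xEl k n c d := by
  simp only [xEl, Finset.sum_mul, ← map_mul]
  exact Finset.sum_nbij' (· * h) (· * h⁻¹) (by simp [mul_mem_cancel_right hh])
    (by simp [mul_mem_cancel_right (inv_mem hh)]) (by simp) (by simp) (fun _ _ => rfl)

lemma of_mul_yEl {h : Equiv.Perm (Fin d)} (hh : h ∈ young n c d) :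
    of k _ h * yEl k n c d = ((Equiv.Perm.sign h : ℤ) : k) • yEl k n c d := by
  simp only [yEl, Finset.mul_sum, Finset.smul_sum, mul_smul_comm, ← map_mul, smul_smul]
  refine Finset.sum_nbij' (h * ·) (h⁻¹ * ·) (by simp [mul_mem_cancel_left hh])
    (by simp [mul_mem_cancel_left (inv_mem hh)]) (by simp) (by simp) (fun b _ => ?_)
  rw [← Int.cast_mul, ← Units.val_mul, Equiv.Perm.sign_mul, ← mul_assoc, Int.units_mul_self,
    one_mul]

lemma xEl_mul_of_mul_yEl_eq_sign_smul {a b : Equiv.Perm (Fin d)} (ha : a ∈ young nμ cμ d)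
    (hb : b ∈ young n c d) (g : Equiv.Perm (Fin d)) :
    xEl k nμ cμ d * of k _ (a * g * b) * yEl k n c d =
      ((Equiv.Perm.sign b : ℤ) : k) • (xEl k nμ cμ d * of k _ g * yEl k n c d) := by
  simp only [map_mul, mul_assoc]
  rw [← mul_assoc (xEl k nμ cμ d), xEl_mul_of ha, of_mul_yEl hb, mul_smul_comm, mul_smul_comm]

lemma xEl_mul_of_mul_yEl_eq_sum (g : Equiv.Perm (Fin d)) :
    xEl k nμ cμ d * of k _ g * yEl k n c d =
      ∑ ab ∈ Finset.univ.filter (· ∈ young nμ cμ d) ×ˢ Finset.univ.filter (· ∈ young n c d),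
        ((Equiv.Perm.sign ab.2 : ℤ) : k) • of k _ (ab.1 * g * ab.2) := by
  rw [Finset.sum_product, xEl, Finset.sum_mul, Finset.sum_mul]
  simp only [yEl, Finset.mul_sum, mul_smul_comm, ← map_mul]

/-- If `p ≠ q` lie in one `𝔖_λ`-block and `g p, g q` in one `𝔖_μ`-block, the pairing
`a ↔ a * swap (g p) (g q)` of `𝔖_μ` cancels the sum termwise, also in characteristic `2`. -/
lemma xEl_mul_of_mul_yEl_eq_zero_of_not_transverse {g : Equiv.Perm (Fin d)}
    (hg : ¬ Transverse nμ cμ n c g) : xEl k nμ cμ d * of k _ g * yEl k n c d = 0 := by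
  obtain ⟨p, q, hrow, hcol, hne⟩ : ∃ p q : Fin d, colorOf n c p = colorOf n c q ∧
      colorOf nμ cμ (g p) = colorOf nμ cμ (g q) ∧ p ≠ q := by
    simpa [Transverse, Function.Injective] using hg
  have hpair : ∀ a, of k _ (a * Equiv.swap (g p) (g q)) * of k _ g * yEl k n c d =
      -(of k _ a * of k _ g * yEl k n c d) := fun a => by
    rw [← map_mul, Equiv.swap_apply_apply, show a * (g * Equiv.swap p q * g⁻¹) * g =
      a * g * Equiv.swap p q by group, map_mul, mul_assoc, of_mul_yEl (swap_mem_young hrow),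
      Equiv.Perm.sign_swap hne, mul_smul_comm]
    simp
  simp only [xEl, Finset.sum_mul]
  refine Finset.sum_involution (fun a _ => a * Equiv.swap (g p) (g q))
    (fun a _ => by rw [hpair, add_neg_cancel]) (fun a _ _ hfix => ?_)
    (fun a ha => by simpa using mul_mem (Finset.mem_filter.mp ha).2 (swap_mem_young hcol))
    (fun a _ => by simp [mul_assoc])
  exact hne (g.injective (Equiv.swap_eq_one_iff.mp (by simpa using hfix)))

/-- The coefficient of `g` in `x_μ g y_λ` is `1`. -/
lemma Transverse.xEl_mul_of_mul_yEl_ne_zero [Nontrivial k] {g : Equiv.Perm (Fin d)}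
    (hg : Transverse nμ cμ n c g) :
    xEl k nμ cμ d * of k _ g * yEl k n c d ≠ 0 := by
  intro h0
  have hcoeff := congrArg (fun z => z.coeff g) h0
  simp only [xEl_mul_of_mul_yEl_eq_sum, coeff_sum, Finsupp.finsetSum_apply] at hcoeff
  rw [Finset.sum_eq_single_of_mem (1, 1) (by simp [one_mem])] at hcoeff
  · simp at hcoeff
  · rintro ⟨a, b⟩ hab hne
    simp only [Finset.mem_product, Finset.mem_filter, Finset.mem_univ, true_and] at hab
    rw [coeff_smul_apply, of_apply, coeff_single, Finsupp.single_apply, if_neg, smul_zero]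
    intro h
    obtain ⟨rfl, rfl⟩ := hg.eq_one_of_mul_mul_eq hab.1 hab.2 h
    exact hne rfl

end GroupAlgebra

section Counting

variable {d nμ n : ℕ} {cμ c : ℕ → ℕ} {g : Equiv.Perm (Fin d)}

lemma Transverse.card_filter_le (hc : IsComposition n c d) (hg : Transverse nμ cμ n c g)
    (s t : ℕ) : #{p : Fin d | colorOf nμ cμ (g p) < t ∧ colorOf n c p = s} ≤ min (c s) t := by
  refine le_min ?_ ?_
  · rw [← hc.card_colorOf_eq s]
    exact Finset.card_le_card fun p hp => by simp_all
  · rw [← Finset.card_range t]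
    refine Finset.card_le_card_of_injOn (fun p => colorOf nμ cμ (g p))
      (fun p hp => by simpa using (Finset.mem_filter.mp hp).2.1) (fun p hp q hq hpq => hg ?_)
    simp only [Finset.coe_filter, Finset.mem_univ, true_and, Set.mem_ofPred_eq] at hp hq
    simp only [Prod.mk.injEq, hp.2, hq.2]
    exact ⟨trivial, hpq⟩

lemma IsComposition.sum_card_filter (hμ : IsComposition nμ cμ d) (hc : IsComposition n c d)
    (g : Equiv.Perm (Fin d)) (t : ℕ) :
    ∑ s ∈ Finset.range n, #{p : Fin d | colorOf nμ cμ (g p) < t ∧ colorOf n c p = s} =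
      psum cμ t := by
  have hfib := Finset.card_eq_sum_card_fiberwise (f := fun p : Fin d => colorOf n c p)
    (s := Finset.univ.filter fun p => colorOf nμ cμ (g p) < t) (t := Finset.range n)
    (fun p _ => by simpa using hc.colorOf_lt p.isLt)
  simp only [Finset.filter_filter] at hfib
  rw [← hfib, ← hμ.card_colorOf_lt t]
  exact Finset.card_equiv g (by simp)

lemma Transverse.dominates (hμ : IsComposition nμ cμ d) (hc : IsComposition n c d)
    (hg : Transverse nμ cμ n c g) : Dominates cμ (transp n c) := fun t => by
  change psum cμ t ≤ psum (transp n c) t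
  rw [← hμ.sum_card_filter hc g t, psum_transp]
  exact Finset.sum_le_sum fun s _ => hg.card_filter_le hc s t

/-- The equality case of the count behind `Transverse.dominates`. -/
lemma Transverse.colorOf_transp_lt (hc : IsPartitionC n c d)
    (hg : Transverse d (transp n c) n c g) (p : Fin d) :
    colorOf d (transp n c) (g p) < c (colorOf n c p) := by
  set s := colorOf n c p
  have hsum := (Finset.sum_eq_sum_iff_of_le fun r _ => hg.card_filter_le hc.1 r (c s)).mp
    (by rw [hc.isComposition_transp.sum_card_filter hc.1, psum_transp]) s
    (Finset.mem_range.mpr (hc.1.colorOf_lt p.isLt))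
  rw [min_self] at hsum
  have hrow := Finset.eq_of_subset_of_card_le (fun q hq => by simp_all)
    (hsum.trans (hc.1.card_colorOf_eq s).symm).ge
  have hp : p ∈ Finset.univ.filter fun q : Fin d => colorOf n c q = s := by simp [s]
  rw [← hrow] at hp
  exact (Finset.mem_filter.mp hp).2.1

end Counting

section RowToColumn

variable {n d : ℕ} {c : ℕ → ℕ}

/-- The cell `(r, k)` of the Young diagram of `c` is the point `psum c r + k` when the diagram is
read along rows, and `psum (transp n c) k + r` when it is read along columns. -/
def rowToColumn (n : ℕ) (c : ℕ → ℕ) (p : ℕ) : ℕ :=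
  psum (transp n c) (p - psum c (colorOf n c p)) + colorOf n c p

lemma IsPartitionC.rowToColumn_spec (hc : IsPartitionC n c d) {p : ℕ} (hp : p < d) :
    rowToColumn n c p < d ∧
      colorOf d (transp n c) (rowToColumn n c p) = p - psum c (colorOf n c p) := by
  obtain ⟨h1, h2⟩ := (hc.1.colorOf_eq_iff hp _).mp rfl
  rw [psum_succ] at h2
  set r := colorOf n c p
  set k := p - psum c r
  have hr : r < transp n c k := hc.lt_transp (hc.1.colorOf_lt hp) (by omega)
  have hk := hc.isComposition_transp.psum_le (k + 1)
  rw [psum_succ] at hk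
  have hdef : rowToColumn n c p = psum (transp n c) k + r := rfl
  have hlt : rowToColumn n c p < d := by omega
  refine ⟨hlt, (hc.isComposition_transp.colorOf_eq_iff hlt k).mpr ?_⟩
  rw [psum_succ]
  omega

lemma IsPartitionC.eq_of_rowToColumn_eq (hc : IsPartitionC n c d) {p q : ℕ} (hp : p < d)
    (hq : q < d) (h : rowToColumn n c p = rowToColumn n c q) : p = q := by
  have hcol := (hc.rowToColumn_spec hp).2
  rw [h, (hc.rowToColumn_spec hq).2] at hcol
  have hp' := ((hc.1.colorOf_eq_iff hp _).mp rfl).1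
  have hq' := ((hc.1.colorOf_eq_iff hq _).mp rfl).1
  unfold rowToColumn at h
  rw [← hcol] at h
  have hrow : colorOf n c p = colorOf n c q := by omega
  rw [hrow] at hcol hp'
  omega

def IsPartitionC.rowToColumnPerm (hc : IsPartitionC n c d) : Equiv.Perm (Fin d) :=
  Equiv.ofBijective (fun p => ⟨rowToColumn n c p, (hc.rowToColumn_spec p.isLt).1⟩)
    (Finite.injective_iff_bijective.mp fun p q h =>
      Fin.ext (hc.eq_of_rowToColumn_eq p.isLt q.isLt (congrArg Fin.val h)))

lemma IsPartitionC.colorOf_rowToColumnPerm (hc : IsPartitionC n c d) (p : Fin d) :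
    colorOf d (transp n c) (hc.rowToColumnPerm p) = p - psum c (colorOf n c p) :=
  (hc.rowToColumn_spec p.isLt).2

lemma IsPartitionC.transverse_rowToColumnPerm (hc : IsPartitionC n c d) :
    Transverse d (transp n c) n c hc.rowToColumnPerm := fun p q h => by
  simp only [Prod.mk.injEq, hc.colorOf_rowToColumnPerm] at h
  have hp := ((hc.1.colorOf_eq_iff p.isLt _).mp rfl).1
  have hq := ((hc.1.colorOf_eq_iff q.isLt _).mp rfl).1
  rw [h.1] at hp h
  exact Fin.ext (by omega)

/-- `b` moves `p` within its row to the column `colorOf d (transp n c) (g p)`. -/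
lemma Transverse.exists_eq_mul_rowToColumnPerm_mul (hc : IsPartitionC n c d)
    {g : Equiv.Perm (Fin d)} (hg : Transverse d (transp n c) n c g) :
    ∃ a ∈ young d (transp n c) d, ∃ b ∈ young n c d, g = a * hc.rowToColumnPerm * b := by
  set f : Fin d → ℕ := fun p => psum c (colorOf n c p) + colorOf d (transp n c) (g p)
  have hlt : ∀ p, f p < psum c (colorOf n c p + 1) := fun p => by
    have := hg.colorOf_transp_lt hc p
    rw [psum_succ]
    dsimp only [f]
    omega
  have hd : ∀ p, f p < d := fun p => (hlt p).trans_le (hc.1.psum_le _)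
  have hrow : ∀ p, colorOf n c (f p) = colorOf n c p := fun p =>
    (hc.1.colorOf_eq_iff (hd p) _).mpr ⟨Nat.le_add_right _ _, hlt p⟩
  have hinj : Function.Injective fun p => (⟨f p, hd p⟩ : Fin d) := fun p q h => by
    have hfpq : f p = f q := congrArg Fin.val h
    have hpq := hrow p
    rw [hfpq, hrow q] at hpq
    refine hg (Prod.ext hpq.symm ?_)
    simp only [f, hpq] at hfpq
    exact Nat.add_left_cancel hfpq
  obtain ⟨b, hb, hbf⟩ := exists_mem_young_coe_eq hinj hrow
  refine ⟨g * (hc.rowToColumnPerm * b)⁻¹, mul_inv_mem_young fun p => ?_, b, hb, by group⟩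
  rw [Equiv.Perm.mul_apply, hc.colorOf_rowToColumnPerm, hbf]
  simp only [hrow, f]
  omega

end RowToColumn

section JamesLemma

open MonoidAlgebra

variable {k : Type} [CommRing k] {d nμ n : ℕ} {cμ c : ℕ → ℕ}

lemma xEl_mul_mul_yEl_eq_zero_of_not_dominates (hμ : IsComposition nμ cμ d)
    (hc : IsComposition n c d) (hdom : ¬ Dominates cμ (transp n c))
    (a : MonoidAlgebra k (Equiv.Perm (Fin d))) : xEl k nμ cμ d * a * yEl k n c d = 0 := by
  refine (Submodule.mem_bot k).mp (mul_mul_mem_of_forall_of_mem ⊥ (fun g => ?_) a)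
  by_contra hne
  exact hdom ((not_imp_comm.mp xEl_mul_of_mul_yEl_eq_zero_of_not_transverse hne).dominates hμ hc)

lemma IsPartitionC.span_xEl_transp_mul_mul_yEl (hc : IsPartitionC n c d) :
    Submodule.span k {z | ∃ a, z = xEl k d (transp n c) d * a * yEl k n c d} =
      k ∙ (xEl k d (transp n c) d * of k _ hc.rowToColumnPerm * yEl k n c d) := by
  refine le_antisymm (Submodule.span_le.mpr ?_)
    (Submodule.span_le.mpr (Set.singleton_subset_iff.mpr (Submodule.subset_span ⟨_, rfl⟩)))
  rintro _ ⟨a, rfl⟩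
  refine mul_mul_mem_of_forall_of_mem _ (fun g => ?_) a
  by_cases hg : Transverse d (transp n c) n c g
  · obtain ⟨a, ha, b, hb, rfl⟩ := hg.exists_eq_mul_rowToColumnPerm_mul hc
    rw [xEl_mul_of_mul_yEl_eq_sign_smul ha hb]
    exact Submodule.smul_mem _ _ (Submodule.mem_span_singleton_self _)
  · rw [xEl_mul_of_mul_yEl_eq_zero_of_not_transverse hg]
    exact Submodule.zero_mem _

end JamesLemma

theorem stmt19 (F : Type) [Field F] (d nμ n : ℕ) (cμ c : ℕ → ℕ)
    (hμ : IsComposition nμ cμ d) (hc : IsPartitionC n c d) :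
    (¬ Dominates cμ (transp n c) →
      ∀ a : MonoidAlgebra F (Equiv.Perm (Fin d)),
        xEl F nμ cμ d * a * yEl F n c d = 0) ∧
    Module.rank F
        ↥(Submodule.span F
          {z : MonoidAlgebra F (Equiv.Perm (Fin d)) |
            ∃ a, z = xEl F d (transp n c) d * a * yEl F n c d}) = 1 := by
  refine ⟨xEl_mul_mul_yEl_eq_zero_of_not_dominates hμ hc.1, ?_⟩
  rw [hc.span_xEl_transp_mul_mul_yEl, Module.rank_eq_one_iff_finrank_eq_one]
  exact finrank_span_singleton hc.transverse_rowToColumnPerm.xEl_mul_of_mul_yEl_ne_zero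
end
end
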